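/- Let I be a compact interval and f : I → X with ‖f'(x)‖ ≥ i > 0 and ‖f''(x)‖ ≤ M for all x ∈ I. Let F be an arc-length parametrization of f (i.e. F = f ∘ v_f^{-1} where v_f(x) = V(f,[min I, x])). If F''(z) exists at a point z, then ‖F''(z)‖ ≤ 2M/i². -/

import Mathlib

/-!
The arc length `v x = V(f, [a, x])` has derivative `‖f'‖`: its slope at `x₀` is squeezed between
`‖slope f x₀ x‖` and `‖f' x₀‖ + M |x - x₀|`, a Lipschitz constant of `f` between `x₀` and `x`.
By the chain rule `f' = ‖f'‖ • (F' ∘ v)`, so `F' ∘ v` is the unit tangent, with derivative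
`‖f' x₀‖ • F'' (v x₀)` at `x₀`. The direction `p / ‖p‖` of a vector moves by at most
`2 ‖Δp‖ / ‖p‖`, which bounds that derivative by `2M / ‖f' x₀‖`, whence
`‖F''‖ ≤ 2M / ‖f' x₀‖² ≤ 2M / i²`. Every point of `[0, ℓ]` is a value of `v` by the intermediate
value theorem.
-/

open Set Filter Topology

theorem LipschitzOnWith.eVariationOn_Icc_le {E : Type*} [PseudoEMetricSpace E] {f : ℝ → E}
    {K : NNReal} {u v : ℝ} (hf : LipschitzOnWith K f (Icc u v)) :
    eVariationOn f (Icc u v) ≤ K * ENNReal.ofReal (v - u) := by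
  simpa using hf.comp_eVariationOn_le (mapsTo_id _)

theorem abs_variationOnFromTo {α E : Type*} [LinearOrder α] [PseudoEMetricSpace E]
    (f : α → E) (s : Set α) (x y : α) :
    |variationOnFromTo f s x y| = (eVariationOn f (s ∩ uIcc x y)).toReal := by
  rcases le_total x y with h | h
  · rw [variationOnFromTo.eq_of_le f s h, uIcc_of_le h, abs_of_nonneg ENNReal.toReal_nonneg]
  · rw [variationOnFromTo.eq_of_ge f s h, uIcc_of_ge h, abs_neg,
      abs_of_nonneg ENNReal.toReal_nonneg]

theorem variationOnFromTo_Icc_left {α E : Type*} [LinearOrder α] [PseudoEMetricSpace E]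
    (f : α → E) {a b x : α} (hx : x ∈ Icc a b) :
    variationOnFromTo f (Icc a b) a x = (eVariationOn f (Icc a x)).toReal := by
  rw [variationOnFromTo.eq_of_le f _ hx.1, inter_eq_right.mpr (Icc_subset_Icc_right hx.2)]

theorem HasDerivWithinAt.norm_le_of_norm_sub_le {E : Type*} [NormedAddCommGroup E]
    [NormedSpace ℝ E] {h : ℝ → E} {h' : E} {s : Set ℝ} {x C : ℝ}
    (hh : HasDerivWithinAt h h' s x) (hs : UniqueDiffWithinAt ℝ s x)
    (hC : ∀ y ∈ s, ‖h y - h x‖ ≤ C * ‖y - x‖) : ‖h'‖ ≤ C := by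
  have : (𝓝[s \ {x}] x).NeBot :=
    accPt_principal_iff_nhdsWithin.mp (uniqueDiffWithinAt_iff_accPt.mp hs)
  refine le_of_tendsto (hasDerivWithinAt_iff_tendsto_slope.mp hh).norm ?_
  filter_upwards [self_mem_nhdsWithin] with y ⟨hys, hyx⟩
  have hpos : 0 < ‖y - x‖ := norm_pos_iff.mpr (sub_ne_zero.mpr hyx)
  rw [slope_def_module, norm_smul, norm_inv, inv_mul_le_iff₀ hpos, mul_comm]
  exact hC y hys

theorem norm_eq_one_of_eq_norm_smul {E : Type*} [NormedAddCommGroup E] [NormedSpace ℝ E]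
    {p e : E} (hp : p = ‖p‖ • e) (hp₀ : p ≠ 0) : ‖e‖ = 1 := by
  have hnorm := congrArg norm hp
  rw [norm_smul, norm_norm] at hnorm
  exact (mul_eq_left₀ (norm_ne_zero_iff.mpr hp₀)).mp hnorm.symm

theorem norm_mul_norm_sub_le_of_eq_norm_smul {E : Type*} [NormedAddCommGroup E]
    [NormedSpace ℝ E] {p q e e' : E} (hp : p = ‖p‖ • e) (hq : q = ‖q‖ • e') (he' : ‖e'‖ = 1) :
    ‖p‖ * ‖e' - e‖ ≤ 2 * ‖q - p‖ :=
  have key : ‖p‖ • (e' - e) = (q - p) - (‖q‖ - ‖p‖) • e' := by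
    rw [smul_sub, sub_smul, ← hp, ← hq]; abel
  calc ‖p‖ * ‖e' - e‖ = ‖(q - p) - (‖q‖ - ‖p‖) • e'‖ := by
        rw [← key, norm_smul, norm_norm]
    _ ≤ ‖q - p‖ + |‖q‖ - ‖p‖| := by
        simpa [norm_smul, he'] using norm_sub_le (q - p) ((‖q‖ - ‖p‖) • e')
    _ ≤ 2 * ‖q - p‖ := by linarith [abs_norm_sub_norm_le q p]

section SecondDerivativeBound

variable {E : Type*} [NormedAddCommGroup E] [NormedSpace ℝ E] {f f' f'' : ℝ → E} {a b M : ℝ}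

theorem eVariationOn_uIcc_le
    (hf : ∀ x ∈ Icc a b, HasDerivWithinAt f (f' x) (Icc a b) x)
    (hf' : ∀ x ∈ Icc a b, HasDerivWithinAt f' (f'' x) (Icc a b) x)
    (hM : ∀ x ∈ Icc a b, ‖f'' x‖ ≤ M) {x₀ x : ℝ} (hx₀ : x₀ ∈ Icc a b) (hx : x ∈ Icc a b) :
    eVariationOn f (uIcc x₀ x) ≤ ENNReal.ofReal ((‖f' x₀‖ + M * |x - x₀|) * |x - x₀|) := by
  have hsub : uIcc x₀ x ⊆ Icc a b := uIcc_subset_Icc hx₀ hx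
  have hM₀ : 0 ≤ M := (norm_nonneg _).trans (hM x₀ hx₀)
  have hbound : ∀ t ∈ uIcc x₀ x, ‖f' t‖ ≤ ‖f' x₀‖ + M * |x - x₀| := fun t ht =>
    calc ‖f' t‖ ≤ ‖f' x₀‖ + ‖f' t - f' x₀‖ := norm_le_insert' _ _
      _ ≤ ‖f' x₀‖ + M * |t - x₀| := by
        rw [← Real.norm_eq_abs]
        gcongr
        exact (convex_Icc a b).norm_image_sub_le_of_norm_hasDerivWithin_le hf' hM hx₀ (hsub ht)
      _ ≤ ‖f' x₀‖ + M * |x - x₀| := by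
        gcongr ‖f' x₀‖ + M * ?_
        exact abs_sub_left_of_mem_uIcc ht
  have hlip : LipschitzOnWith (‖f' x₀‖ + M * |x - x₀|).toNNReal f (uIcc x₀ x) :=
    (convex_uIcc x₀ x).lipschitzOnWith_of_nnnorm_hasDerivWithin_le
      (fun t ht => (hf t (hsub ht)).mono hsub)
      (fun t ht => by
        rw [← NNReal.coe_le_coe, coe_nnnorm, Real.coe_toNNReal _ (by positivity)]
        exact hbound t ht)
  calc eVariationOn f (uIcc x₀ x)
      ≤ (‖f' x₀‖ + M * |x - x₀|).toNNReal * ENNReal.ofReal (max x₀ x - min x₀ x) :=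
        hlip.eVariationOn_Icc_le
    _ = ENNReal.ofReal ((‖f' x₀‖ + M * |x - x₀|) * |x - x₀|) := by
        rw [max_sub_min_eq_abs', abs_sub_comm, ENNReal.ofReal_mul' (abs_nonneg _)]
        rfl

theorem boundedVariationOn_Icc
    (hf : ∀ x ∈ Icc a b, HasDerivWithinAt f (f' x) (Icc a b) x)
    (hf' : ∀ x ∈ Icc a b, HasDerivWithinAt f' (f'' x) (Icc a b) x)
    (hM : ∀ x ∈ Icc a b, ‖f'' x‖ ≤ M) : BoundedVariationOn f (Icc a b) := by
  rcases le_or_gt a b with hab | hba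
  · have hvar := eVariationOn_uIcc_le hf hf' hM (left_mem_Icc.2 hab) (right_mem_Icc.2 hab)
    rw [uIcc_of_le hab] at hvar
    exact ne_top_of_le_ne_top ENNReal.ofReal_ne_top hvar
  · exact .of_subsingleton (Icc_eq_empty hba.not_ge ▸ subsingleton_empty)

theorem hasDerivWithinAt_variationOnFromTo
    (hf : ∀ x ∈ Icc a b, HasDerivWithinAt f (f' x) (Icc a b) x)
    (hf' : ∀ x ∈ Icc a b, HasDerivWithinAt f' (f'' x) (Icc a b) x)
    (hM : ∀ x ∈ Icc a b, ‖f'' x‖ ≤ M) {x₀ : ℝ} (hx₀ : x₀ ∈ Icc a b) :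
    HasDerivWithinAt (variationOnFromTo f (Icc a b) a) ‖f' x₀‖ (Icc a b) x₀ := by
  have hbv := boundedVariationOn_Icc hf hf' hM
  have hlbv := hbv.locallyBoundedVariationOn
  have ha : a ∈ Icc a b := left_mem_Icc.2 (hx₀.1.trans hx₀.2)
  have hslope : ∀ x ∈ Icc a b, slope (variationOnFromTo f (Icc a b) a) x₀ x =
      (eVariationOn f (uIcc x₀ x)).toReal / |x - x₀| := fun x hx => by
    rw [← abs_of_nonneg ((variationOnFromTo.monotoneOn hlbv ha).slope_nonneg hx₀ hx),
      slope_def_field, abs_div, variationOnFromTo.sub_right hlbv ha hx hx₀,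
      abs_variationOnFromTo, inter_eq_right.mpr (uIcc_subset_Icc hx₀ hx)]
  have hlower : Tendsto (fun x => ‖slope f x₀ x‖) (𝓝[Icc a b \ {x₀}] x₀) (𝓝 ‖f' x₀‖) :=
    (hasDerivWithinAt_iff_tendsto_slope.mp (hf x₀ hx₀)).norm
  have hupper : Tendsto (fun x => ‖f' x₀‖ + M * |x - x₀|) (𝓝[Icc a b \ {x₀}] x₀)
      (𝓝 ‖f' x₀‖) := by
    have hcont : Continuous fun x => ‖f' x₀‖ + M * |x - x₀| := by fun_prop
    simpa using (hcont.tendsto x₀).mono_left nhdsWithin_le_nhds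
  rw [hasDerivWithinAt_iff_tendsto_slope]
  refine tendsto_of_tendsto_of_tendsto_of_le_of_le' hlower hupper ?_ ?_ <;>
    filter_upwards [self_mem_nhdsWithin] with x ⟨hx, hxx₀⟩ <;>
    rw [hslope x hx]
  · rw [slope_def_module, norm_smul, norm_inv, Real.norm_eq_abs, inv_mul_eq_div, ← dist_eq_norm]
    gcongr
    exact (hbv.mono (uIcc_subset_Icc hx₀ hx)).dist_le right_mem_uIcc left_mem_uIcc
  · have hM₀ : 0 ≤ M := (norm_nonneg _).trans (hM x₀ hx₀)
    rw [div_le_iff₀ (abs_pos.mpr (sub_ne_zero.mpr hxx₀))]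
    exact ENNReal.toReal_le_of_le_ofReal (by positivity) (eVariationOn_uIcc_le hf hf' hM hx₀ hx)

theorem norm_mul_norm_deriv_le_of_eq_norm_smul (hab : a < b)
    (hf' : ∀ x ∈ Icc a b, HasDerivWithinAt f' (f'' x) (Icc a b) x)
    (hM : ∀ x ∈ Icc a b, ‖f'' x‖ ≤ M) {g : ℝ → E} {g' : E}
    (hfg : ∀ x ∈ Icc a b, f' x = ‖f' x‖ • g x) (hg : ∀ x ∈ Icc a b, ‖g x‖ = 1)
    {x₀ : ℝ} (hx₀ : x₀ ∈ Icc a b) (hg' : HasDerivWithinAt g g' (Icc a b) x₀) :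
    ‖f' x₀‖ * ‖g'‖ ≤ 2 * M := by
  rw [← norm_norm (f' x₀), ← norm_smul]
  refine (hg'.const_smul ‖f' x₀‖).norm_le_of_norm_sub_le (uniqueDiffOn_Icc hab x₀ hx₀)
    fun y hy => ?_
  calc ‖‖f' x₀‖ • g y - ‖f' x₀‖ • g x₀‖ = ‖f' x₀‖ * ‖g y - g x₀‖ := by
        rw [← smul_sub, norm_smul, norm_norm]
    _ ≤ 2 * ‖f' y - f' x₀‖ :=
        norm_mul_norm_sub_le_of_eq_norm_smul (hfg x₀ hx₀) (hfg y hy) (hg y hy)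
    _ ≤ 2 * (M * ‖y - x₀‖) := by
        gcongr
        exact (convex_Icc a b).norm_image_sub_le_of_norm_hasDerivWithin_le hf' hM hx₀ hy
    _ = 2 * M * ‖y - x₀‖ := by ring

end SecondDerivativeBound

/-- Lemma: if `‖f'‖ ≥ i > 0` and `‖f''‖ ≤ M` on a compact interval `I = [a,b]`, and
`F = f ∘ v_f⁻¹` is the arc-length parametrization (encoded by `F (v_f x) = f x`),
then any existing second derivative of `F` satisfies `‖F''(z)‖ ≤ 2M/i²`. -/
theorem stmt_9 {X : Type*} [NormedAddCommGroup X] [NormedSpace ℝ X]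
    (a b : ℝ) (hab : a < b) (f f' f'' : ℝ → X)
    (hf' : ∀ x ∈ Set.Icc a b, HasDerivWithinAt f (f' x) (Set.Icc a b) x)
    (hf'' : ∀ x ∈ Set.Icc a b, HasDerivWithinAt f' (f'' x) (Set.Icc a b) x)
    (i M : ℝ) (hi : 0 < i)
    (hlow : ∀ x ∈ Set.Icc a b, i ≤ ‖f' x‖)
    (hupp : ∀ x ∈ Set.Icc a b, ‖f'' x‖ ≤ M)
    (vf : ℝ → ℝ) (hvf : ∀ x ∈ Set.Icc a b, vf x = (eVariationOn f (Set.Icc a x)).toReal)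
    (ℓ : ℝ) (hl : ℓ = vf b)
    (F F' : ℝ → X)
    (hF : ∀ x ∈ Set.Icc a b, F (vf x) = f x)
    (hF' : ∀ y ∈ Set.Icc 0 ℓ, HasDerivWithinAt F (F' y) (Set.Icc 0 ℓ) y)
    (z : ℝ) (hz : z ∈ Set.Icc 0 ℓ) (F''z : X)
    (hF'' : HasDerivWithinAt F' F''z (Set.Icc 0 ℓ) z) :
    ‖F''z‖ ≤ 2 * M / i ^ 2 := by
  set s := Icc a b
  have ha : a ∈ s := left_mem_Icc.2 hab.le
  have hvf_eq : EqOn vf (variationOnFromTo f s a) s := fun x hx =>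
    (hvf x hx).trans (variationOnFromTo_Icc_left f hx).symm
  have hvf' : ∀ x ∈ s, HasDerivWithinAt vf ‖f' x‖ s x := fun x hx =>
    (hasDerivWithinAt_variationOnFromTo hf' hf'' hupp hx).congr hvf_eq (hvf_eq hx)
  have hmono : MonotoneOn vf s :=
    (variationOnFromTo.monotoneOn (boundedVariationOn_Icc hf' hf'' hupp).locallyBoundedVariationOn
      ha).congr hvf_eq.symm
  have hvfa : vf a = 0 := (hvf_eq ha).trans (variationOnFromTo.self f s a)
  have hmaps : MapsTo vf s (Icc 0 ℓ) := fun x hx =>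
    ⟨hvfa ▸ hmono ha hx hx.1, hl ▸ hmono hx (right_mem_Icc.2 hab.le) hx.2⟩
  obtain ⟨x₀, hx₀, rfl⟩ : z ∈ vf '' s :=
    intermediate_value_Icc hab.le (fun x hx => (hvf' x hx).continuousWithinAt) (by rwa [hvfa, ← hl])
  have htangent : ∀ x ∈ s, f' x = ‖f' x‖ • F' (vf x) := fun x hx =>
    (uniqueDiffOn_Icc hab x hx).eq_deriv s (hf' x hx)
      (((hF' _ (hmaps hx)).scomp x (hvf' x hx) hmaps).congr (fun y hy => (hF y hy).symm)
        (hF x hx).symm)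
  have hunit : ∀ x ∈ s, ‖F' (vf x)‖ = 1 := fun x hx =>
    norm_eq_one_of_eq_norm_smul (htangent x hx) (norm_pos_iff.mp (hi.trans_le (hlow x hx)))
  have hcurv : ‖f' x₀‖ * ‖‖f' x₀‖ • F''z‖ ≤ 2 * M :=
    norm_mul_norm_deriv_le_of_eq_norm_smul hab hf'' hupp htangent hunit hx₀
      (hF''.scomp x₀ (hvf' x₀ hx₀) hmaps)
  rw [le_div_iff₀ (by positivity)]
  calc ‖F''z‖ * i ^ 2 ≤ ‖F''z‖ * ‖f' x₀‖ ^ 2 := by gcongr; exact hlow x₀ hx₀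
    _ = ‖f' x₀‖ * ‖‖f' x₀‖ • F''z‖ := by rw [norm_smul, norm_norm]; ring
    _ ≤ 2 * M := hcurv
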